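/- As $n \to \infty$, the ratio of GBCs of the $n$-qubit W state and GHZ state tends to 1: $\lim_{n\to\infty} \mathcal{G}(|W_n\rangle)/\mathcal{G}(|\mathrm{GHZ}_n\rangle) = 1$, with the ratio always strictly less than 1 for $n \ge 3$. -/

import Mathlib

/-- Multiplicity of the bipartitions of `n` parties whose smaller side has `m`
parties: `n.choose m` for `m < n/2`, and half of that when `n = 2m`. -/
noncomputable def kExp (n m : ℕ) : ℝ :=
  if 2 * m = n then (n.choose m : ℝ) / 2 else (n.choose m : ℝ)

/-- Total number of bipartitions of `n` parties. -/
noncomputable def cAlpha (n : ℕ) : ℝ := ∑ m ∈ Finset.Icc 1 (n / 2), kExp n m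

/-- Closed form for the GHZ-state bipartite concurrence across a bipartition
whose smaller side has `m` qubits. -/
noncomputable def ghzConc (m : ℕ) : ℝ := Real.sqrt ((2:ℝ)^m / (2 * ((2:ℝ)^m - 1)))

/-- Closed form for the W-state bipartite concurrence across a bipartition
whose smaller side has `m` qubits. -/
noncomputable def wConc (n m : ℕ) : ℝ :=
  Real.sqrt ((2:ℝ)^(m+1) * m * ((n:ℝ) - m) / (((2:ℝ)^m - 1) * (n:ℝ)^2))

/-- Product of all bipartite concurrences of the `n`-qubit GHZ state. -/
noncomputable def ghzProd (n : ℕ) : ℝ :=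
  ∏ m ∈ Finset.Icc 1 (n / 2), (ghzConc m) ^ (kExp n m)

/-- Product of all bipartite concurrences of the `n`-qubit W state. -/
noncomputable def wProd (n : ℕ) : ℝ :=
  ∏ m ∈ Finset.Icc 1 (n / 2), (wConc n m) ^ (kExp n m)

/-- The GBC of the `n`-qubit GHZ state (closed form). -/
noncomputable def ghzGBC (n : ℕ) : ℝ := (ghzProd n) ^ (1 / cAlpha n)

/-- The GBC of the `n`-qubit W state (closed form). -/
noncomputable def wGBC (n : ℕ) : ℝ := (wProd n) ^ (1 / cAlpha n)

/-!
Across a cut of `m` versus `n - m` qubits the W/GHZ concurrence ratio is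
`√(4m(n-m))/n = √(1 - d²/n²)` with `d = n - 2m`, so the GBC ratio is `exp` of the
`kExp`-weighted mean of these logarithms. Every term is `≤ 0` and the `m = 1` term is `< 0`.
Conversely `log x ≥ 1 - 1/x` gives `-log √(1 - d²/n²) ≤ (d²/n² + d⁴/(2n³))/2`, and the second
and fourth central moments of the binomial weights, `n 2ⁿ` and `(3n² - 2n) 2ⁿ`, set against the
total weight `cAlpha n = 2ⁿ⁻¹ - 1`, bound the mean below by `-5/n`.
-/

open Finset Real

theorem Finset.sum_range_succ_choose_mul (g : ℕ → ℝ) (n : ℕ) :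
    ∑ m ∈ range (n + 2), ((n + 1).choose m : ℝ) * g m
      = ∑ m ∈ range (n + 1), (n.choose m : ℝ) * (g m + g (m + 1)) := by
  simpa only [mul_add, sum_add_distrib] using sum_choose_succ_mul (fun i _ => g i) n

theorem sum_range_succ_choose_mul_sub_two_mul_pow (n k : ℕ) :
    ∑ m ∈ range (n + 1 + 1), ((n + 1).choose m : ℝ) * (((n + 1 : ℕ) : ℝ) - 2 * m) ^ k
      = ∑ m ∈ range (n + 1), (n.choose m : ℝ) *
          (((n : ℝ) - 2 * m + 1) ^ k + ((n : ℝ) - 2 * m - 1) ^ k) := by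
  rw [sum_range_succ_choose_mul]
  refine sum_congr rfl fun m _ => ?_
  push_cast
  ring_nf

theorem sum_range_choose_real (n : ℕ) : ∑ m ∈ range (n + 1), (n.choose m : ℝ) = 2 ^ n := by
  exact_mod_cast Nat.sum_range_choose n

theorem sum_range_choose_mul_sub_two_mul_sq (n : ℕ) :
    ∑ m ∈ range (n + 1), (n.choose m : ℝ) * ((n : ℝ) - 2 * m) ^ 2 = (n : ℝ) * 2 ^ n := by
  induction n with
  | zero => simp
  | succ n ih =>
    rw [sum_range_succ_choose_mul_sub_two_mul_pow]
    simp only [show ∀ d : ℝ, (d + 1) ^ 2 + (d - 1) ^ 2 = 2 * d ^ 2 + 2 by intro d; ring,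
      mul_add, sum_add_distrib, mul_left_comm _ (2 : ℝ), ← mul_sum, ← sum_mul, ih,
      sum_range_choose_real]
    push_cast
    ring

theorem sum_range_choose_mul_sub_two_mul_pow_four (n : ℕ) :
    ∑ m ∈ range (n + 1), (n.choose m : ℝ) * ((n : ℝ) - 2 * m) ^ 4
      = (3 * (n : ℝ) ^ 2 - 2 * n) * 2 ^ n := by
  induction n with
  | zero => simp
  | succ n ih =>
    rw [sum_range_succ_choose_mul_sub_two_mul_pow]
    simp only [show ∀ d : ℝ, (d + 1) ^ 4 + (d - 1) ^ 4 = 2 * d ^ 4 + 12 * d ^ 2 + 2 by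
        intro d; ring,
      mul_add, sum_add_distrib, mul_left_comm _ (2 : ℝ), mul_left_comm _ (12 : ℝ), ← mul_sum,
      ← sum_mul, ih, sum_range_choose_mul_sub_two_mul_sq, sum_range_choose_real]
    push_cast
    ring

theorem two_mul_cAlpha (n : ℕ) (hn : 1 ≤ n) : 2 * cAlpha n = 2 ^ n - 2 := by
  set w : ℕ → ℝ := fun m => if 2 * m < n then 1 else if 2 * m = n then 1 / 2 else 0
  have hw : ∀ m ∈ range (n + 1), w m + w (n - m) = 1 := by
    intro m hm
    rw [mem_range] at hm
    simp only [w]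
    split_ifs <;> first | omega | norm_num
  have hreflect : ∑ m ∈ range (n + 1), (n.choose m : ℝ) * w (n - m)
      = ∑ m ∈ range (n + 1), (n.choose m : ℝ) * w m := by
    rw [← sum_range_reflect]
    refine sum_congr rfl fun m hm => ?_
    rw [mem_range] at hm
    rw [Nat.add_sub_cancel, Nat.sub_sub_self (by omega), Nat.choose_symm (by omega)]
  have htotal : 2 * ∑ m ∈ range (n + 1), (n.choose m : ℝ) * w m = 2 ^ n := by
    rw [two_mul]
    nth_rw 1 [← hreflect]
    rw [← sum_add_distrib, ← sum_range_choose_real]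
    exact sum_congr rfl fun m hm => by rw [← mul_add, add_comm, hw m hm, mul_one]
  have hsplit : ∑ m ∈ range (n + 1), (n.choose m : ℝ) * w m = 1 + cAlpha n := by
    rw [range_eq_Ico, sum_eq_sum_Ico_succ_bot (by omega), cAlpha]
    congr 1
    · simp [w, show 0 < n by omega]
    · symm
      refine sum_subset_zero_on_sdiff (fun m hm => ?_) (fun m hm => ?_) (fun m hm => ?_)
      · simp only [mem_Icc, mem_Ico] at hm ⊢; omega
      · simp only [mem_sdiff, mem_Icc, mem_Ico] at hm
        simp only [w, if_neg (show ¬ 2 * m < n by omega), if_neg (show ¬ 2 * m = n by omega),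
          mul_zero]
      · simp only [mem_Icc] at hm
        simp only [kExp, w]
        split_ifs <;> first | omega | ring
  linarith

theorem pow_div_four_le_cAlpha {n : ℕ} (hn : 2 ≤ n) : (2 : ℝ) ^ n / 4 ≤ cAlpha n := by
  have : (2 : ℝ) ^ 2 ≤ 2 ^ n := pow_le_pow_right₀ one_le_two hn
  linarith [two_mul_cAlpha n (by omega)]

theorem ghzConc_pos {m : ℕ} (hm : 1 ≤ m) : 0 < ghzConc m := by
  have : (1 : ℝ) < 2 ^ m := one_lt_pow₀ one_lt_two (by omega)
  unfold ghzConc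
  exact sqrt_pos.2 (div_pos (by positivity) (by linarith))

theorem wConc_pos {n m : ℕ} (hm : 1 ≤ m) (hmn : m < n) : 0 < wConc n m := by
  have : (1 : ℝ) < 2 ^ m := one_lt_pow₀ one_lt_two (by omega)
  have : (m : ℝ) < n := by exact_mod_cast hmn
  have : (1 : ℝ) ≤ m := by exact_mod_cast hm
  unfold wConc
  exact sqrt_pos.2 (div_pos (mul_pos (mul_pos (by positivity) (by linarith)) (by linarith))
    (mul_pos (by linarith) (pow_pos (by linarith) 2)))

noncomputable def concRatio (n m : ℕ) : ℝ := √(4 * m * (n - m) / n ^ 2)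

theorem wConc_div_ghzConc (n : ℕ) {m : ℕ} (hm : 1 ≤ m) :
    wConc n m / ghzConc m = concRatio n m := by
  have : (1 : ℝ) < 2 ^ m := one_lt_pow₀ one_lt_two (by omega)
  rcases Nat.eq_zero_or_pos n with rfl | hn
  · simp [wConc, concRatio]
  have : (n : ℝ) ≠ 0 := by positivity
  have : (2 : ℝ) ^ m - 1 ≠ 0 := by linarith
  rw [wConc, ghzConc, concRatio, ← sqrt_div' _ (div_nonneg (by positivity) (by linarith))]
  congr 1
  field_simp
  ring

theorem concRatio_pos {n m : ℕ} (hm : 1 ≤ m) (hmn : m < n) : 0 < concRatio n m := by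
  rw [← wConc_div_ghzConc n hm]
  exact div_pos (wConc_pos hm hmn) (ghzConc_pos hm)

theorem rpow_prod_rpow_eq_exp {ι : Type*} {s : Finset ι} {a : ι → ℝ} (ha : ∀ i ∈ s, 0 < a i)
    (k : ι → ℝ) (r : ℝ) :
    (∏ i ∈ s, a i ^ k i) ^ r = exp (r * ∑ i ∈ s, k i * log (a i)) := by
  have hprod : 0 < ∏ i ∈ s, a i ^ k i := prod_pos fun i hi => rpow_pos_of_pos (ha i hi) _
  rw [← exp_log (rpow_pos_of_pos hprod r), log_rpow hprod,
    log_prod fun i hi => (rpow_pos_of_pos (ha i hi) _).ne']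
  exact congrArg (fun x => exp (r * x)) (sum_congr rfl fun i hi => log_rpow (ha i hi) _)

noncomputable def logGBCRatio (n : ℕ) : ℝ :=
  (∑ m ∈ Icc 1 (n / 2), kExp n m * log (concRatio n m)) / cAlpha n

theorem wGBC_div_ghzGBC_eq_exp (n : ℕ) : wGBC n / ghzGBC n = exp (logGBCRatio n) := by
  have hprod : wProd n / ghzProd n = ∏ m ∈ Icc 1 (n / 2), concRatio n m ^ kExp n m := by
    rw [wProd, ghzProd, ← prod_div_distrib]
    refine prod_congr rfl fun m hm => ?_
    rw [mem_Icc] at hm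
    rw [← div_rpow (wConc_pos hm.1 (by omega)).le (ghzConc_pos hm.1).le,
      wConc_div_ghzConc n hm.1]
  rw [wGBC, ghzGBC, ← div_rpow (by unfold wProd wConc; positivity)
      (by unfold ghzProd ghzConc; positivity), hprod,
    rpow_prod_rpow_eq_exp (fun m hm => concRatio_pos (mem_Icc.1 hm).1 (by simp at hm; omega)),
    logGBCRatio, one_div_mul_eq_div]

theorem neg_le_log_sq_sub_sq_div_sq {N d : ℝ} (hN : 0 < N) (h : 2 * N ≤ N ^ 2 - d ^ 2) :
    -(d ^ 2 / N ^ 2 + d ^ 4 / (2 * N ^ 3)) ≤ log ((N ^ 2 - d ^ 2) / N ^ 2) := by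
  have hD : 0 < N ^ 2 - d ^ 2 := by linarith
  have hlog := one_sub_inv_le_log_of_pos (div_pos hD (pow_pos hN 2))
  have hinv : 1 - ((N ^ 2 - d ^ 2) / N ^ 2)⁻¹ = -(d ^ 2 / (N ^ 2 - d ^ 2)) := by
    field_simp
    ring
  -- `d² / (N² - d²) = d² / N² + d⁴ / (N² (N² - d²))`, and `N² - d² ≥ 2N` bounds the last term
  have hsplit : d ^ 2 / (N ^ 2 - d ^ 2) ≤ d ^ 2 / N ^ 2 + d ^ 4 / (2 * N ^ 3) := by
    rw [div_add_div _ _ (by positivity) (by positivity), div_le_div_iff₀ hD (by positivity)]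
    nlinarith [mul_nonneg (mul_nonneg (sq_nonneg N) (by positivity : (0 : ℝ) ≤ d ^ 4))
      (sub_nonneg.2 h)]
  linarith

theorem log_concRatio_ge {n m : ℕ} (hm : 1 ≤ m) (hmn : 2 * m ≤ n) :
    -((((n : ℝ) - 2 * m) ^ 2 / n ^ 2 + ((n : ℝ) - 2 * m) ^ 4 / (2 * n ^ 3)) / 2)
      ≤ log (concRatio n m) := by
  have hm' : (1 : ℝ) ≤ m := by exact_mod_cast hm
  have hmn' : 2 * (m : ℝ) ≤ n := by exact_mod_cast hmn
  have hsq : 4 * (m : ℝ) * (n - m) = (n : ℝ) ^ 2 - (n - 2 * m) ^ 2 := by ring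
  have hbound : 2 * (n : ℝ) ≤ (n : ℝ) ^ 2 - (n - 2 * m) ^ 2 := by nlinarith
  rw [concRatio, hsq, log_sqrt (div_nonneg (by linarith) (by positivity))]
  linarith [neg_le_log_sq_sub_sq_div_sq (by linarith) hbound]

theorem kExp_nonneg (n m : ℕ) : 0 ≤ kExp n m := by
  unfold kExp
  split_ifs <;> positivity

theorem sum_kExp_mul_le_sum_choose_mul (n : ℕ) {f : ℕ → ℝ} (hf : ∀ m, 0 ≤ f m) :
    ∑ m ∈ Icc 1 (n / 2), kExp n m * f m ≤ ∑ m ∈ range (n + 1), (n.choose m : ℝ) * f m := by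
  calc ∑ m ∈ Icc 1 (n / 2), kExp n m * f m
      ≤ ∑ m ∈ Icc 1 (n / 2), (n.choose m : ℝ) * f m := by
        refine sum_le_sum fun m _ => mul_le_mul_of_nonneg_right ?_ (hf m)
        unfold kExp
        split_ifs <;> linarith [(Nat.cast_nonneg _ : (0 : ℝ) ≤ n.choose m)]
    _ ≤ ∑ m ∈ range (n + 1), (n.choose m : ℝ) * f m := by
        refine sum_le_sum_of_subset_of_nonneg (fun m hm => ?_) fun m _ _ => by
          have := hf m
          positivity
        simp only [mem_Icc, mem_range] at hm ⊢
        omega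

theorem logGBCRatio_ge {n : ℕ} (hn : 2 ≤ n) : -5 / (n : ℝ) ≤ logGBCRatio n := by
  have hN : (2 : ℝ) ≤ n := by exact_mod_cast hn
  have hc := pow_div_four_le_cAlpha hn
  set p : ℕ → ℝ := fun m => ((n : ℝ) - 2 * m) ^ 2 / n ^ 2 + ((n : ℝ) - 2 * m) ^ 4 / (2 * n ^ 3)
  have hmoments : ∑ m ∈ range (n + 1), (n.choose m : ℝ) * p m ≤ 5 / 2 * 2 ^ n / n := by
    simp only [p, mul_add, sum_add_distrib, mul_div_assoc', ← sum_div,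
      sum_range_choose_mul_sub_two_mul_sq, sum_range_choose_mul_sub_two_mul_pow_four]
    rw [div_add_div _ _ (by positivity) (by positivity), div_le_div_iff₀ (by positivity)
      (by positivity)]
    nlinarith [pow_pos (by linarith : (0 : ℝ) < n) 4, (by positivity : (0 : ℝ) < 2 ^ n)]
  have hsum : -(5 / 4 * 2 ^ n / n) ≤ ∑ m ∈ Icc 1 (n / 2), kExp n m * log (concRatio n m) := by
    calc -(5 / 4 * 2 ^ n / n) ≤ -(∑ m ∈ Icc 1 (n / 2), kExp n m * p m) / 2 := by
          have := sum_kExp_mul_le_sum_choose_mul n (f := p) fun m => by positivity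
          have : 5 / 4 * (2 : ℝ) ^ n / n = 5 / 2 * 2 ^ n / n / 2 := by ring
          linarith
      _ = ∑ m ∈ Icc 1 (n / 2), kExp n m * -(p m / 2) := by
          rw [neg_div, sum_div, ← sum_neg_distrib]
          exact sum_congr rfl fun m _ => by ring
      _ ≤ ∑ m ∈ Icc 1 (n / 2), kExp n m * log (concRatio n m) := by
          refine sum_le_sum fun m hm => mul_le_mul_of_nonneg_left ?_ (kExp_nonneg n m)
          rw [mem_Icc] at hm
          exact log_concRatio_ge hm.1 (by omega)
  rw [logGBCRatio, le_div_iff₀ ((by positivity : (0 : ℝ) < 2 ^ n / 4).trans_le hc)]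
  have : -5 / (n : ℝ) * cAlpha n ≤ -5 / n * (2 ^ n / 4) :=
    mul_le_mul_of_nonpos_left hc (div_nonpos_of_nonpos_of_nonneg (by norm_num) (by positivity))
  linarith [show -5 / (n : ℝ) * (2 ^ n / 4) = -(5 / 4 * 2 ^ n / n) by ring]

theorem concRatio_le_one (n m : ℕ) : concRatio n m ≤ 1 := by
  rw [concRatio, sqrt_le_one]
  exact div_le_one_of_le₀ (by nlinarith [sq_nonneg ((n : ℝ) - 2 * m)]) (by positivity)

theorem concRatio_lt_one {n m : ℕ} (hmn : 2 * m < n) : concRatio n m < 1 := by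
  have hmn' : 2 * (m : ℝ) < n := by exact_mod_cast hmn
  rw [concRatio, sqrt_lt' one_pos, one_pow, div_lt_one (by nlinarith)]
  nlinarith

theorem logGBCRatio_neg {n : ℕ} (hn : 3 ≤ n) : logGBCRatio n < 0 := by
  have hc : 0 < cAlpha n := (by positivity : (0 : ℝ) < 2 ^ n / 4).trans_le
    (pow_div_four_le_cAlpha (by omega))
  have hk1 : 0 < kExp n 1 := by
    rw [kExp, if_neg (by omega), Nat.choose_one_right, Nat.cast_pos]
    omega
  refine div_neg_of_neg_of_pos ?_ hc
  calc ∑ m ∈ Icc 1 (n / 2), kExp n m * log (concRatio n m)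
      < ∑ m ∈ Icc 1 (n / 2), (0 : ℝ) := by
        refine sum_lt_sum (fun m _ => mul_nonpos_of_nonneg_of_nonpos (kExp_nonneg n m)
          (log_nonpos (sqrt_nonneg _) (concRatio_le_one n m))) ⟨1, ?_, ?_⟩
        · rw [mem_Icc]
          omega
        · exact mul_neg_of_pos_of_neg hk1 (log_neg (concRatio_pos le_rfl (by omega))
            (concRatio_lt_one (by omega)))
    _ = 0 := sum_const_zero

/-- As `n → ∞` the ratio of the GBCs of the `n`-qubit W and GHZ states tends
to `1`, while being strictly less than `1` for every `n ≥ 3`. -/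
theorem wGBC_div_ghzGBC_tendsto_one :
    Filter.Tendsto (fun n : ℕ => wGBC n / ghzGBC n) Filter.atTop (nhds 1) ∧
    ∀ n : ℕ, 3 ≤ n → wGBC n / ghzGBC n < 1 := by
  simp only [wGBC_div_ghzGBC_eq_exp]
  refine ⟨?_, fun n hn => exp_lt_one_iff.2 (logGBCRatio_neg hn)⟩
  have hlog : Filter.Tendsto logGBCRatio Filter.atTop (nhds 0) := by
    refine tendsto_of_tendsto_of_tendsto_of_le_of_le' (tendsto_const_div_atTop_nhds_zero_nat (-5))
      tendsto_const_nhds ?_ ?_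
    · filter_upwards [Filter.eventually_ge_atTop 2] with n hn using logGBCRatio_ge hn
    · filter_upwards [Filter.eventually_ge_atTop 3] with n hn using (logGBCRatio_neg hn).le
  simpa only [exp_zero] using hlog.rexp
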